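/- If G is a finite C-I cograph, then G is claw-free, i.e., G contains no induced subgraph isomorphic to the complete bipartite graph K_{1,3}. -/

import Mathlib

open SimpleGraph

/-- The cover-incomparability graph of a poset `V`: distinct `u, v` are adjacent iff
`u` covers `v`, `v` covers `u`, or `u` and `v` are incomparable. -/
def ciGraph (V : Type*) [PartialOrder V] : SimpleGraph V where
  Adj u v := u ⋖ v ∨ v ⋖ u ∨ (¬ u ≤ v ∧ ¬ v ≤ u)
  symm := by
    constructor
    intro u v h
    rcases h with h | h | h
    · exact Or.inr (Or.inl h)
    · exact Or.inl h
    · exact Or.inr (Or.inr ⟨h.2, h.1⟩)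
  loopless := by
    constructor
    intro u h
    rcases h with h | h | h
    · exact h.ne rfl
    · exact h.ne rfl
    · exact h.1 le_rfl

/-- A graph is a C-I graph if it is isomorphic to the cover-incomparability graph
of some finite poset. -/
def IsCIGraph {W : Type u} (G : SimpleGraph W) : Prop :=
  ∃ (V : Type u) (inst : PartialOrder V) (_ : Finite V),
    Nonempty (G ≃g @ciGraph V inst)

/-- A vertex is simplicial if its neighborhood is a clique. -/
def IsSimplicialVertex {V : Type*} (G : SimpleGraph V) (v : V) : Prop :=
  G.IsClique (G.neighborSet v)

/-- A graph is chordal if it has no induced cycle of length greater than 3. -/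
def IsChordal {V : Type*} (G : SimpleGraph V) : Prop :=
  ∀ n : ℕ, 3 < n → IsEmpty (cycleGraph n ↪g G)

/-- A cograph: no induced path on four vertices. -/
def IsCograph {V : Type*} (G : SimpleGraph V) : Prop :=
  ¬ ∃ a b c d : V, a ≠ b ∧ a ≠ c ∧ a ≠ d ∧ b ≠ c ∧ b ≠ d ∧ c ≠ d ∧
    G.Adj a b ∧ G.Adj b c ∧ G.Adj c d ∧ ¬ G.Adj a c ∧ ¬ G.Adj a d ∧ ¬ G.Adj b d

/-- `G` has exactly two independent simplicial vertices. -/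
def HasExactlyTwoIndepSimplicial {V : Type*} (G : SimpleGraph V) : Prop :=
  (∃ a b : V, a ≠ b ∧ ¬ G.Adj a b ∧ IsSimplicialVertex G a ∧ IsSimplicialVertex G b) ∧
  ¬ ∃ a b c : V, a ≠ b ∧ a ≠ c ∧ b ≠ c ∧ ¬ G.Adj a b ∧ ¬ G.Adj a c ∧ ¬ G.Adj b c ∧
    IsSimplicialVertex G a ∧ IsSimplicialVertex G b ∧ IsSimplicialVertex G c

/-- A complete graph: all distinct vertices adjacent. -/
def IsCompleteGraph {V : Type*} (G : SimpleGraph V) : Prop :=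
  ∀ u v : V, u ≠ v → G.Adj u v

/-- A maximal clique of `G`. -/
def IsMaxClique {V : Type*} (G : SimpleGraph V) (s : Set V) : Prop :=
  G.IsClique s ∧ ∀ t : Set V, G.IsClique t → s ⊆ t → t = s

/-! In the C-I graph two distinct elements are non-adjacent exactly when they are comparable but
not a cover. A chain of three covers `t ⋖ s ⋖ q ⋖ v` is therefore an induced `P₄`, so in a finite
poset whose C-I graph is a cograph every `p < q` lying below some `r > q` must be a cover (refine
`p < q < r` into covers otherwise). Three pairwise non-adjacent vertices would form such a chain
`p < q < r` with `p < q` not a cover; in particular the three leaves of a claw cannot exist. -/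

theorem IsCograph.comap {V W : Type*} {G : SimpleGraph V} {H : SimpleGraph W} (f : H ↪g G)
    (hG : IsCograph G) : IsCograph H := by
  rintro ⟨a, b, c, d, hab, hac, had, hbc, hbd, hcd, eab, ebc, ecd, nac, nad, nbd⟩
  exact hG ⟨f a, f b, f c, f d, f.injective.ne hab, f.injective.ne hac, f.injective.ne had,
    f.injective.ne hbc, f.injective.ne hbd, f.injective.ne hcd, f.map_adj_iff.mpr eab,
    f.map_adj_iff.mpr ebc, f.map_adj_iff.mpr ecd, mt f.map_adj_iff.mp nac,
    mt f.map_adj_iff.mp nad, mt f.map_adj_iff.mp nbd⟩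

section ciGraph

variable {W : Type*} [PartialOrder W] {a b c d : W}

@[simp]
theorem ciGraph_adj : (ciGraph W).Adj a b ↔ a ⋖ b ∨ b ⋖ a ∨ (¬ a ≤ b ∧ ¬ b ≤ a) := Iff.rfl

theorem CovBy.ciGraph_adj (h : a ⋖ b) : (ciGraph W).Adj a b := Or.inl h

theorem lt_or_gt_of_not_ciGraph_adj (hne : a ≠ b) (h : ¬ (ciGraph W).Adj a b) : a < b ∨ b < a := by
  simp only [ciGraph_adj, not_or, not_and_or, not_not] at h
  rcases h.2.2 with hab | hba
  · exact Or.inl (hab.lt_of_ne hne)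
  · exact Or.inr (hba.lt_of_ne hne.symm)

theorem ciGraph_not_adj_of_lt_of_lt (hab : a < b) (hbc : b < c) : ¬ (ciGraph W).Adj a c := by
  have hac := hab.trans hbc
  simp only [ciGraph_adj, not_or, not_and_or, not_not]
  exact ⟨not_covBy_of_lt_of_lt hab hbc, fun h => h.lt.not_gt hac, Or.inl hac.le⟩

theorem not_isCograph_ciGraph_of_covBy (hab : a ⋖ b) (hbc : b ⋖ c) (hcd : c ⋖ d) :
    ¬ IsCograph (ciGraph W) := fun hcog =>
  hcog ⟨a, b, c, d, hab.ne, (hab.lt.trans hbc.lt).ne, (hab.lt.trans (hbc.lt.trans hcd.lt)).ne,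
    hbc.ne, (hbc.lt.trans hcd.lt).ne, hcd.ne, hab.ciGraph_adj, hbc.ciGraph_adj, hcd.ciGraph_adj,
    ciGraph_not_adj_of_lt_of_lt hab.lt hbc.lt,
    ciGraph_not_adj_of_lt_of_lt hab.lt (hbc.lt.trans hcd.lt),
    ciGraph_not_adj_of_lt_of_lt hbc.lt hcd.lt⟩

variable [IsStronglyAtomic W] [IsStronglyCoatomic W]

theorem IsCograph.covBy_of_lt_of_lt (hcog : IsCograph (ciGraph W)) (hab : a < b) (hbc : b < c) :
    a ⋖ b := by
  by_contra hnot
  obtain ⟨s, has, hsb⟩ := exists_le_covBy_of_lt hab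
  have has' : a < s := has.lt_of_ne fun h => hnot (h ▸ hsb)
  obtain ⟨t, -, hts⟩ := exists_le_covBy_of_lt has'
  obtain ⟨u, hbu, -⟩ := exists_covBy_le_of_lt hbc
  exact not_isCograph_ciGraph_of_covBy hts hsb hbu hcog

theorem IsCograph.ciGraph_adj_of_ne (hcog : IsCograph (ciGraph W)) (hab : a ≠ b) (hac : a ≠ c)
    (hbc : b ≠ c) : (ciGraph W).Adj a b ∨ (ciGraph W).Adj a c ∨ (ciGraph W).Adj b c := by
  by_contra! ⟨nab, nac, nbc⟩
  have key {p q r : W} (hpq : p < q) (hqr : q < r) (npq : ¬ (ciGraph W).Adj p q) : False :=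
    npq (hcog.covBy_of_lt_of_lt hpq hqr).ciGraph_adj
  rcases lt_or_gt_of_not_ciGraph_adj hab nab with h₁ | h₁ <;>
  rcases lt_or_gt_of_not_ciGraph_adj hac nac with h₂ | h₂ <;>
  rcases lt_or_gt_of_not_ciGraph_adj hbc nbc with h₃ | h₃
  · exact key h₁ h₃ nab
  · exact key h₂ h₃ nac
  · exact (h₁.trans h₃).not_gt h₂
  · exact key h₂ h₁ fun h => nac h.symm
  · exact key h₁ h₂ fun h => nab h.symm
  · exact (h₂.trans h₃).not_gt h₁
  · exact key h₃ h₂ nbc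
  · exact key h₃ h₁ fun h => nbc h.symm

end ciGraph

theorem CI_cograph_clawFree_general {V : Type u} (G : SimpleGraph V)
    (hcog : IsCograph G) (hCI : IsCIGraph G) :
    ¬ ∃ x a b c : V, x ≠ a ∧ x ≠ b ∧ x ≠ c ∧ a ≠ b ∧ a ≠ c ∧ b ≠ c ∧
      G.Adj x a ∧ G.Adj x b ∧ G.Adj x c ∧ ¬ G.Adj a b ∧ ¬ G.Adj a c ∧ ¬ G.Adj b c := by
  rintro ⟨-, a, b, c, -, -, -, hab, hac, hbc, -, -, -, nab, nac, nbc⟩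
  obtain ⟨W, _, _, ⟨f⟩⟩ := hCI
  have hcogW : IsCograph (ciGraph W) := hcog.comap f.symm.toEmbedding
  rcases hcogW.ciGraph_adj_of_ne (f.injective.ne hab) (f.injective.ne hac) (f.injective.ne hbc)
    with h | h | h
  · exact nab (f.map_adj_iff.mp h)
  · exact nac (f.map_adj_iff.mp h)
  · exact nbc (f.map_adj_iff.mp h)

/-- A finite C-I cograph is claw-free. -/
theorem CI_cograph_clawFree {V : Type u} [Finite V] (G : SimpleGraph V)
    (hcog : IsCograph G) (hCI : IsCIGraph G) :
    ¬ ∃ x a b c : V, x ≠ a ∧ x ≠ b ∧ x ≠ c ∧ a ≠ b ∧ a ≠ c ∧ b ≠ c ∧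
      G.Adj x a ∧ G.Adj x b ∧ G.Adj x c ∧ ¬ G.Adj a b ∧ ¬ G.Adj a c ∧ ¬ G.Adj b c :=
  CI_cograph_clawFree_general G hcog hCI
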